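/- arXiv:1910.03847 — 5 statements merged into one kernel-verified Lean document; each statement's English description precedes it below -/
import Mathlib

section
/- Let X be a real Banach space and φ : X → (-∞, +∞] a proper convex lower semicontinuous function. Then the graph of ∂φ is nonempty, i.e., ∂φ is a proper point-to-set operator. -/
noncomputable section

variable {X : Type*} [NormedAddCommGroup X] [NormedSpace ℝ X] [CompleteSpace X]

/-- The subdifferential of an extended-real-valued function `φ : X → (-∞,+∞]`,
viewed as a subset of `X × X*`: `(x, x*) ∈ ∂φ` iff `⟨y - x, x*⟩ + φ(x) ≤ φ(y)` for all `y`. -/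
def subdiff (φ : X → EReal) : Set (X × (X →L[ℝ] ℝ)) :=
  {p | ∀ y : X, ((p.2 (y - p.1) : ℝ) : EReal) + φ p.1 ≤ φ y}

/-- Convexity for extended-real-valued functions. -/
def ERealConvexOn {E : Type*} [AddCommGroup E] [Module ℝ E] (φ : E → EReal) : Prop :=
  ∀ x y : E, ∀ a b : ℝ, 0 ≤ a → 0 ≤ b → a + b = 1 →
    φ (a • x + b • y) ≤ (a : EReal) * φ x + (b : EReal) * φ y

/-- A function `X → (-∞,+∞]` is proper: it never takes the value `-∞` and is
finite somewhere. -/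
def ProperFn {E : Type*} (φ : E → EReal) : Prop :=
  (∀ x, φ x ≠ ⊥) ∧ (∃ x, φ x ≠ ⊤)

/-- The duality mapping `J_X(x) = {x* : ⟨x, x*⟩ = ‖x‖² = ‖x*‖²}`. -/
def dualityMap (x : X) : Set (X →L[ℝ] ℝ) :=
  {x' | x' x = ‖x‖ ^ 2 ∧ ‖x‖ ^ 2 = ‖x'‖ ^ 2}

/-- A monotone subset of `X × X*`. -/
def MonotoneSet (A : Set (X × (X →L[ℝ] ℝ))) : Prop :=
  ∀ p ∈ A, ∀ q ∈ A, 0 ≤ (p.2 - q.2) (p.1 - q.1)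

/-- A maximal monotone subset of `X × X*`. -/
def MaximalMonotoneSet (A : Set (X × (X →L[ℝ] ℝ))) : Prop :=
  MonotoneSet A ∧
    ∀ p : X × (X →L[ℝ] ℝ), (∀ q ∈ A, 0 ≤ (p.2 - q.2) (p.1 - q.1)) → p ∈ A

/-- The Fitzpatrick function of an operator `A : X ⇉ X*`:
`H_A(x, x*) = sup {⟨u, x*⟩ + ⟨x, u*⟩ - ⟨u, u*⟩ : (u, u*) ∈ A}`. -/
def fitz (A : Set (X × (X →L[ℝ] ℝ))) (p : X × (X →L[ℝ] ℝ)) : EReal :=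
  ⨆ q ∈ A, ((p.2 q.1 + q.2 p.1 - q.2 q.1 : ℝ) : EReal)

/-- `(x*, x) ∈ ∂H_A(u, u*)`, the subdifferential of the Fitzpatrick function at `(u, u*)`
with the pairing `⟨(x*, x), (z, z*)⟩ = ⟨z, x*⟩ + ⟨x, z*⟩`:
`⟨z - u, x*⟩ + ⟨x, z* - u*⟩ + H(u, u*) ≤ H(z, z*)` for all `(z, z*)`. -/
def inSubdiffFitz (A : Set (X × (X →L[ℝ] ℝ))) (u : X) (u' : X →L[ℝ] ℝ)
    (x' : X →L[ℝ] ℝ) (x : X) : Prop :=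
  ∀ z : X, ∀ z' : X →L[ℝ] ℝ,
    ((x' (z - u) + (z' - u') x : ℝ) : EReal) + fitz A (u, u') ≤ fitz A (z, z')

/-!
Separating the closed convex epigraph of `φ` from a point below it gives a continuous affine
minorant `l`. Then `φ - l` is lower semicontinuous, nonnegative and somewhere finite, so Ekeland's
variational principle on the Banach space `X` yields `z` with
`l x - l z + φ z - ‖x - z‖ ≤ φ x` for all `x`. The left-hand side is a continuous concave function
touching `φ` at `z`; a hyperplane separating its open strict hypograph from the epigraph of `φ` is
non-vertical and passes through `(z, φ z)`, and its slope is a subgradient of `φ` at `z`.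
-/

open Set Filter
open scoped ENNReal

lemma exists_mem_le_iInf_add {α : Type*} {ψ : α → ℝ≥0∞} {s : Set α} {u : α} (hu : u ∈ s)
    {ε : ℝ≥0∞} (hε : ε ≠ 0) : ∃ v ∈ s, ψ v ≤ (⨅ x ∈ s, ψ x) + ε := by
  by_cases htop : (⨅ x ∈ s, ψ x) = ⊤
  · exact ⟨u, hu, by simp [htop]⟩
  · obtain ⟨v, hv, hlt⟩ : ∃ v ∈ s, ψ v < (⨅ x ∈ s, ψ x) + ε := by
      simpa only [iInf_lt_iff, exists_prop] using ENNReal.lt_add_right htop hε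
    exact ⟨v, hv, hlt.le⟩

section Ekeland

variable {α : Type*} [PseudoEMetricSpace α] {ψ : α → ℝ≥0∞}

/-- `x ∈ ekelandSet ψ u` is the Brøndsted order `x ≼ u` behind Ekeland's principle. -/
def ekelandSet (ψ : α → ℝ≥0∞) (u : α) : Set α :=
  {x | ψ x + edist x u ≤ ψ u}

lemma self_mem_ekelandSet (u : α) : u ∈ ekelandSet ψ u := by
  simp [ekelandSet]

lemma ekelandSet_subset {u v : α} (hv : v ∈ ekelandSet ψ u) :
    ekelandSet ψ v ⊆ ekelandSet ψ u := fun w hw =>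
  calc ψ w + edist w u ≤ ψ w + edist w v + edist v u := by
        rw [add_assoc]; gcongr; exact edist_triangle _ _ _
    _ ≤ ψ v + edist v u := by gcongr; exact hw
    _ ≤ ψ u := hv

lemma isClosed_ekelandSet (hψ : LowerSemicontinuous ψ) (u : α) :
    IsClosed (ekelandSet ψ u) :=
  (hψ.add (continuous_id.edist continuous_const).lowerSemicontinuous).isClosed_preimage (ψ u)

lemma sum_edist_add_le_of_mem_ekelandSet {s : ℕ → α}
    (hs : ∀ n, s (n + 1) ∈ ekelandSet ψ (s n)) (N : ℕ) :
    (∑ n ∈ Finset.range N, edist (s (n + 1)) (s n)) + ψ (s N) ≤ ψ (s 0) := by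
  induction N with
  | zero => simp
  | succ N ih =>
    calc (∑ n ∈ Finset.range (N + 1), edist (s (n + 1)) (s n)) + ψ (s (N + 1))
        = (∑ n ∈ Finset.range N, edist (s (n + 1)) (s n))
            + (ψ (s (N + 1)) + edist (s (N + 1)) (s N)) := by
          rw [Finset.sum_range_succ]; ring
      _ ≤ (∑ n ∈ Finset.range N, edist (s (n + 1)) (s n)) + ψ (s N) := by gcongr; exact hs N
      _ ≤ ψ (s 0) := ih

lemma cauchySeq_of_mem_ekelandSet {s : ℕ → α} (hs : ∀ n, s (n + 1) ∈ ekelandSet ψ (s n))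
    (h0 : ψ (s 0) ≠ ⊤) : CauchySeq s := by
  refine cauchySeq_of_edist_le_of_tsum_ne_top (fun n => edist (s (n + 1)) (s n))
    (fun n => (edist_comm _ _).le) (ne_top_of_le_ne_top h0 ?_)
  refine ENNReal.tsum_le_of_sum_range_le fun N => ?_
  exact le_self_add.trans (sum_edist_add_le_of_mem_ekelandSet hs N)

/-- Ekeland's variational principle, with `ε = λ = 1`. -/
theorem exists_le_forall_le_add_edist [CompleteSpace α] (hψ : LowerSemicontinuous ψ) {x₀ : α}
    (h0 : ψ x₀ ≠ ⊤) : ∃ z, ψ z ≤ ψ x₀ ∧ ∀ x, ψ z ≤ ψ x + edist x z := by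
  choose step hstep_mem hstep_le using fun (n : ℕ) (u : α) =>
    exists_mem_le_iInf_add (ψ := ψ) (self_mem_ekelandSet u) (ε := 2⁻¹ ^ n) (by simp)
  let s : ℕ → α := fun n => Nat.rec (motive := fun _ => α) x₀ step n
  have hs : ∀ n, s (n + 1) ∈ ekelandSet ψ (s n) := fun n => hstep_mem n (s n)
  have hanti : Antitone fun n => ekelandSet ψ (s n) :=
    antitone_nat_of_succ_le fun n => ekelandSet_subset (hs n)
  obtain ⟨z, hz⟩ := cauchySeq_tendsto_of_complete (cauchySeq_of_mem_ekelandSet hs h0)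
  have hz_mem : ∀ n, z ∈ ekelandSet ψ (s n) := fun n =>
    (isClosed_ekelandSet hψ (s n)).mem_of_tendsto hz
      (eventually_atTop.2 ⟨n, fun m hm => hanti hm (self_mem_ekelandSet (s m))⟩)
  have hz_le : ∀ n, ψ z ≤ ψ (s n) := fun n => le_self_add.trans (hz_mem n)
  refine ⟨z, hz_le 0, fun x => ?_⟩
  by_contra! hx
  have hx_mem : ∀ n, x ∈ ekelandSet ψ (s n) := fun n => ekelandSet_subset (hz_mem n) hx.le
  have hzx : ψ z ≤ ψ x := by
    refine ENNReal.le_of_forall_pos_le_add fun ε hε _ => ?_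
    obtain ⟨n, hn⟩ := ENNReal.exists_inv_two_pow_lt (a := (ε : ℝ≥0∞)) (by simpa using hε.ne')
    calc ψ z ≤ ψ (s (n + 1)) := hz_le (n + 1)
      _ ≤ (⨅ y ∈ ekelandSet ψ (s n), ψ y) + 2⁻¹ ^ n := hstep_le n (s n)
      _ ≤ ψ x + ε := by gcongr; exact biInf_le _ (hx_mem n)
  exact (hzx.trans le_self_add).not_gt hx

end Ekeland

lemma exists_forall_sub_dist_le {α : Type*} [PseudoMetricSpace α] [CompleteSpace α]
    {φ : α → EReal} {l : α → ℝ} (hφ : LowerSemicontinuous φ) (hl : Continuous l)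
    (hle : ∀ x, (l x : EReal) ≤ φ x) {x₀ : α} (hx₀ : φ x₀ ≠ ⊤) :
    ∃ z, ∃ a : ℝ, φ z = a ∧ ∀ x, ((l x - l z + a - dist x z : ℝ) : EReal) ≤ φ x := by
  set ψ : α → ℝ≥0∞ := fun x => (φ x + ((-l x : ℝ) : EReal)).toENNReal
  have hψ : LowerSemicontinuous ψ :=
    EReal.continuous_toENNReal.comp_lowerSemicontinuous
      (hφ.add' (continuous_coe_real_ereal.comp hl.neg).lowerSemicontinuous fun x =>
        EReal.continuousAt_add (.inr (EReal.coe_ne_bot _)) (.inr (EReal.coe_ne_top _)))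
      fun _ _ => EReal.toENNReal_le_toENNReal
  have hψ_ne_top {x : α} (hx : φ x ≠ ⊤) : ψ x ≠ ⊤ :=
    EReal.toENNReal_ne_top_iff.2 (EReal.add_ne_top hx (EReal.coe_ne_top _))
  have hψ_eq {x : α} {b : ℝ} (hb : φ x = b) : ψ x = ENNReal.ofReal (b - l x) := by
    simp only [ψ, hb, ← EReal.coe_add, EReal.real_coe_toENNReal, sub_eq_add_neg]
  obtain ⟨z, hz₀, hz⟩ := exists_le_forall_le_add_edist hψ (hψ_ne_top hx₀)
  have hz_top : φ z ≠ ⊤ := fun h => hψ_ne_top hx₀ (top_le_iff.1 (by simpa [ψ, h] using hz₀))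
  have hz_bot : φ z ≠ ⊥ := ne_bot_of_le_ne_bot (EReal.coe_ne_bot _) (hle z)
  obtain ⟨a, ha⟩ : ∃ a : ℝ, φ z = a := ⟨_, (EReal.coe_toReal hz_top hz_bot).symm⟩
  refine ⟨z, a, ha, fun x => ?_⟩
  rcases eq_or_ne (φ x) ⊤ with hx | hx
  · simp [hx]
  obtain ⟨b, hb⟩ : ∃ b : ℝ, φ x = b :=
    ⟨_, (EReal.coe_toReal hx (ne_bot_of_le_ne_bot (EReal.coe_ne_bot _) (hle x))).symm⟩
  have hlb : l x ≤ b := by simpa [hb] using hle x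
  have key := hz x
  rw [hψ_eq ha, hψ_eq hb, edist_dist,
    ← ENNReal.ofReal_add (by linarith) dist_nonneg,
    ENNReal.ofReal_le_ofReal_iff (by linarith [dist_nonneg (x := x) (y := z)])] at key
  rw [hb, EReal.coe_le_coe_iff]
  linarith

section Epigraph

variable {E : Type*}

def realEpigraph (φ : E → EReal) : Set (E × ℝ) :=
  {p | φ p.1 ≤ p.2}

lemma isClosed_realEpigraph [TopologicalSpace E] {φ : E → EReal} (hφ : LowerSemicontinuous φ) :
    IsClosed (realEpigraph φ) :=
  hφ.isClosed_epigraph.preimage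
    (continuous_fst.prodMk (continuous_coe_real_ereal.comp continuous_snd))

lemma convex_realEpigraph [AddCommGroup E] [Module ℝ E] {φ : E → EReal} (hφ : ERealConvexOn φ) :
    Convex ℝ (realEpigraph φ) := by
  intro p hp q hq a b ha hb hab
  calc φ (a • p.1 + b • q.1) ≤ (a : EReal) * φ p.1 + (b : EReal) * φ q.1 := hφ _ _ a b ha hb hab
    _ ≤ (a : EReal) * p.2 + (b : EReal) * q.2 := by
        gcongr
        exacts [hp, hq]
    _ = ((a • p + b • q).2 : ℝ) := by simp [← EReal.coe_mul, ← EReal.coe_add]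

lemma ContinuousLinearMap.apply_prod_real [AddCommGroup E] [Module ℝ E] [TopologicalSpace E]
    (f : E × ℝ →L[ℝ] ℝ) (x : E) (r : ℝ) : f (x, r) = f (x, 0) + f (0, 1) * r := by
  have hsplit : (x, r) = (x, 0) + r • ((0 : E), (1 : ℝ)) := by simp
  rw [hsplit, map_add, map_smul, smul_eq_mul, mul_comm]

lemma le_of_forall_mem_realEpigraph_le [AddCommGroup E] [Module ℝ E] [TopologicalSpace E]
    {φ : E → EReal} {f : E × ℝ →L[ℝ] ℝ} {u : ℝ} (hpos : 0 < f (0, 1))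
    (hf : ∀ p ∈ realEpigraph φ, u ≤ f p) (x : E) :
    (((u - f (x, 0)) / f (0, 1) : ℝ) : EReal) ≤ φ x := by
  refine EReal.le_of_forall_lt_iff_le.1 fun r hr => ?_
  have := hf (x, r) hr.le
  rw [f.apply_prod_real] at this
  exact EReal.coe_le_coe_iff.2 ((div_le_iff₀ hpos).2 (by linarith))

end Epigraph

lemma exists_continuousLinearMap_add_const_le {E : Type*} [TopologicalSpace E] [AddCommGroup E]
    [IsTopologicalAddGroup E] [Module ℝ E] [ContinuousSMul ℝ E] [LocallyConvexSpace ℝ E]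
    {φ : E → EReal} (hproper : ProperFn φ) (hconv : ERealConvexOn φ)
    (hlsc : LowerSemicontinuous φ) :
    ∃ (L : E →L[ℝ] ℝ) (c : ℝ), ∀ x, ((L x + c : ℝ) : EReal) ≤ φ x := by
  obtain ⟨x₀, hx₀⟩ := hproper.2
  obtain ⟨r₀, hr₀⟩ : ∃ r : ℝ, φ x₀ = r := ⟨_, (EReal.coe_toReal hx₀ (hproper.1 x₀)).symm⟩
  have hbelow : (x₀, r₀ - 1) ∉ realEpigraph φ := by
    change ¬φ x₀ ≤ ((r₀ - 1 : ℝ) : EReal)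
    rw [hr₀, EReal.coe_le_coe_iff]
    linarith
  obtain ⟨f, u, hfu, hf⟩ := geometric_hahn_banach_point_closed (convex_realEpigraph hconv)
    (isClosed_realEpigraph hlsc) hbelow
  have hpos : 0 < f (0, 1) := by
    have hon := hf (x₀, r₀) (by simp [realEpigraph, hr₀])
    rw [f.apply_prod_real] at hon hfu
    linarith
  refine ⟨-(f (0, 1))⁻¹ • f.comp (.inl ℝ E ℝ), u / f (0, 1), fun x => ?_⟩
  convert le_of_forall_mem_realEpigraph_le hpos (fun p hp => (hf p hp).le) x using 2
  simp only [smul_apply, ContinuousLinearMap.comp_apply,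
    ContinuousLinearMap.inl_apply, smul_eq_mul]
  field_simp
  ring

theorem exists_mem_subdiff_of_concaveOn_le {E : Type*} [NormedAddCommGroup E] [NormedSpace ℝ E]
    {φ : E → EReal} (hconv : ERealConvexOn φ) {h : E → ℝ} (hh : ConcaveOn ℝ univ h)
    (hhc : Continuous h) (hle : ∀ x, (h x : EReal) ≤ φ x) {z : E}
    (hz : φ z = h z) : ∃ x', (z, x') ∈ subdiff φ := by
  set B : Set (E × ℝ) := {p | p.1 ∈ univ ∧ p.2 < h p.1}
  have hB : IsOpen B := by
    simpa [B] using isOpen_lt continuous_snd (hhc.comp continuous_fst)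
  have hdisj : Disjoint B (realEpigraph φ) := disjoint_left.2 fun p hpB hpA =>
    (EReal.coe_lt_coe_iff.2 hpB.2).not_ge ((hle p.1).trans hpA)
  obtain ⟨f, u, hfB, hfA⟩ := geometric_hahn_banach_open hh.convex_strict_hypograph hB
    (convex_realEpigraph hconv) hdisj
  have hbelow : ∀ t > 0, f (z, 0) + f (0, 1) * (h z - t) < u := fun t ht => by
    rw [← f.apply_prod_real]
    exact hfB (z, h z - t) ⟨trivial, by simp; linarith⟩
  have hat : u ≤ f (z, 0) + f (0, 1) * h z := by
    rw [← f.apply_prod_real]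
    exact hfA (z, h z) hz.le
  have hpos : 0 < f (0, 1) := by nlinarith [hbelow 1 one_pos]
  -- `(z, h z)` lies in the epigraph and in the closure of `B`, so the hyperplane passes through it
  have hu : u = f (z, 0) + f (0, 1) * h z := by
    refine le_antisymm hat (le_of_forall_pos_lt_add fun ε hε => ?_)
    have := hbelow (ε / f (0, 1)) (div_pos hε hpos)
    rw [mul_sub, mul_div_cancel₀ _ hpos.ne'] at this
    linarith
  refine ⟨-(f (0, 1))⁻¹ • f.comp (.inl ℝ E ℝ), fun y => ?_⟩
  convert le_of_forall_mem_realEpigraph_le hpos hfA y using 1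
  rw [hz, ← EReal.coe_add, hu]
  congr 1
  simp only [smul_apply, ContinuousLinearMap.comp_apply, map_sub,
    ContinuousLinearMap.inl_apply, smul_eq_mul]
  field_simp
  ring

/-- the subdifferential of a proper convex l.s.c. function has nonempty graph. -/
theorem subdiff_nonempty (φ : X → EReal) (hproper : ProperFn φ)
    (hconv : ERealConvexOn φ) (hlsc : LowerSemicontinuous φ) :
    (subdiff φ).Nonempty := by
  obtain ⟨L, c, hLc⟩ := exists_continuousLinearMap_add_const_le hproper hconv hlsc
  obtain ⟨x₀, hx₀⟩ := hproper.2
  obtain ⟨z, a, hza, hz⟩ :=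
    exists_forall_sub_dist_le (l := fun x => L x + c) hlsc (by fun_prop) hLc hx₀
  have hconc : ConcaveOn ℝ univ fun x => L x + c - (L z + c) + a - dist x z :=
    ((((L : X →ₗ[ℝ] ℝ).concaveOn convex_univ).add_const c).add_const _).add_const _ |>.sub
      (convexOn_dist z convex_univ)
  obtain ⟨x', hx'⟩ := exists_mem_subdiff_of_concaveOn_le (z := z) hconv hconc (by fun_prop) hz
    (by simp [hza])
  exact ⟨_, hx'⟩
end
end

section
/- Let X be a real Banach space and φ : X → (-∞, +∞] proper convex lower semicontinuous. Then for all λ > 0, the closure of the range of J_X + λ∂φ equals X*, i.e., for every z* ∈ X* and every ε > 0 there exist x ∈ X, y* ∈ J_X(x), x* ∈ ∂φ(x) with ‖z* - (y* + λx*)‖ ≤ ε. -/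
noncomputable section

variable {X : Type*} [NormedAddCommGroup X] [NormedSpace ℝ X] [CompleteSpace X]

/-! Put `u* = z* - λx*`. Ekeland's principle, applied to the coercive lower semicontinuous
function `φ + (‖·‖²/2 - z*)/λ`, gives a point `v` minimizing it up to the perturbation
`(ε/λ)‖· - v‖`. Splitting a subgradient of this sum at `v` (a Hahn–Banach sandwich argument,
which needs only the continuity of the finite convex part) gives `x* ∈ ∂φ(v)` such that `v`
minimizes `‖·‖²/2 - u*` up to `ε‖· - v‖`. Splitting once more gives
`y* ∈ ∂(‖·‖²/2)(v) ⊆ J_X(v)` with `‖u* - y*‖ ≤ ε`. -/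

open Set Filter Topology Metric

theorem le_of_forall_pos_le_add_mul {a b c : ℝ} (h : ∀ t > 0, a ≤ b + t * c) : a ≤ b := by
  have hlim : Tendsto (fun t => b + t * c) (𝓝[>] 0) (𝓝 b) := by
    have hcont : Continuous fun t : ℝ => b + t * c := by fun_prop
    simpa using (hcont.tendsto 0).mono_left nhdsWithin_le_nhds
  exact ge_of_tendsto hlim (eventually_nhdsWithin_of_forall h)

theorem EReal.exists_monotone_continuous_coe_eq_of_mem_Icc {a b : ℝ} (hab : a ≤ b) :
    ∃ T : EReal → ℝ, Monotone T ∧ Continuous T ∧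
      ∀ t ∈ Icc (a : EReal) b, (T t : EReal) = t := by
  have hab' : (a : EReal) ≤ b := EReal.coe_le_coe_iff.2 hab
  have hfin (t : Icc (a : EReal) b) : (t : EReal) ≠ ⊥ ∧ (t : EReal) ≠ ⊤ :=
    ⟨ne_bot_of_le_ne_bot (EReal.coe_ne_bot a) t.2.1,
      ne_top_of_le_ne_top (EReal.coe_ne_top b) t.2.2⟩
  refine ⟨fun t => (projIcc _ _ hab' t : EReal).toReal, fun s t hst => ?_, ?_, fun t ht => ?_⟩
  · exact EReal.toReal_le_toReal (monotone_projIcc hab' hst) (hfin _).1 (hfin _).2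
  · exact EReal.continuousOn_toReal.comp_continuous
      (continuous_subtype_val.comp continuous_projIcc)
      fun t => by simpa [not_or] using hfin (projIcc _ _ hab' t)
  · simp only [projIcc_of_mem hab' ht]
    exact EReal.coe_toReal (hfin ⟨t, ht⟩).2 (hfin ⟨t, ht⟩).1

section Ekeland

variable {E : Type*} [MetricSpace E] {g : E → ℝ} {δ ε : ℝ} {x y z : E}

def descentSet (g : E → ℝ) (δ : ℝ) (x : E) : Set E :=
  {z | g z + δ * dist x z ≤ g x}

theorem self_mem_descentSet : x ∈ descentSet g δ x := by
  simp [descentSet]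

theorem descentSet_subset (hδ : 0 ≤ δ) (hz : z ∈ descentSet g δ x) :
    descentSet g δ z ⊆ descentSet g δ x := fun y hy => by
  have := mul_le_mul_of_nonneg_left (dist_triangle x z y) hδ
  simp only [descentSet, mem_ofPred_eq] at hz hy ⊢
  linarith

theorem isClosed_descentSet (hg : LowerSemicontinuous g) : IsClosed (descentSet g δ x) :=
  (hg.add (continuous_const.mul (continuous_const.dist continuous_id)).lowerSemicontinuous
    ).isClosed_preimage (g x)

theorem exists_mem_descentSet_forall_le_add (hg : BddBelow (range g)) (x : E)
    (hε : 0 < ε) :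
    ∃ y ∈ descentSet g δ x, ∀ z ∈ descentSet g δ x, g y ≤ g z + ε := by
  have hne : (g '' descentSet g δ x).Nonempty := ⟨g x, x, self_mem_descentSet, rfl⟩
  have hbdd : BddBelow (g '' descentSet g δ x) := hg.mono (image_subset_range _ _)
  obtain ⟨_, ⟨y, hy, rfl⟩, hlt⟩ := Real.lt_sInf_add_pos hne hε
  exact ⟨y, hy, fun z hz => by linarith [csInf_le hbdd (mem_image_of_mem g hz)]⟩

theorem descentSet_subset_closedBall (hδ : 0 < δ) (hy : y ∈ descentSet g δ x)
    (hmin : ∀ z ∈ descentSet g δ x, g y ≤ g z + ε) :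
    descentSet g δ y ⊆ closedBall y (ε / δ) := fun z hz => by
  have := hmin z (descentSet_subset hδ.le hy hz)
  rw [mem_closedBall, dist_comm, le_div_iff₀ hδ]
  simp only [descentSet, mem_ofPred_eq] at hz
  linarith

theorem LowerSemicontinuous.exists_le_forall_le_add_mul_dist [CompleteSpace E]
    (hg : LowerSemicontinuous g) (hbdd : BddBelow (range g)) (hδ : 0 < δ) (x₀ : E) :
    ∃ v, g v ≤ g x₀ ∧ ∀ y, g v ≤ g y + δ * dist v y := by
  -- `x (n + 1)` is a `1 / (n + 1)`-minimizer of `g` on `descentSet g δ (x n)`, so the nested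
  -- closed sets `S n` shrink to a point `v`, and nothing in `descentSet g δ v` can beat `v`.
  choose next hnext_mem hnext_min using fun (n : ℕ) x =>
    exists_mem_descentSet_forall_le_add (δ := δ) hbdd x (Nat.one_div_pos_of_nat (n := n))
  let x : ℕ → E := fun n => Nat.rec x₀ next n
  let S : ℕ → Set E := fun n => descentSet g δ (x (n + 1))
  have hS_anti : Antitone S :=
    antitone_nat_of_succ_le fun n => descentSet_subset hδ.le (hnext_mem _ _)
  have hS_ball (n : ℕ) : S n ⊆ closedBall (x (n + 1)) (1 / ((n : ℝ) + 1) / δ) :=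
    descentSet_subset_closedBall hδ (hnext_mem n (x n)) (hnext_min n (x n))
  have hS_diam : Tendsto (fun n => diam (S n)) atTop (𝓝 0) := by
    refine squeeze_zero (fun _ => diam_nonneg)
      (fun n => diam_le_of_subset_closedBall (by positivity) (hS_ball n)) ?_
    simpa using (tendsto_one_div_add_atTop_nhds_zero_nat.div_const δ).const_mul 2
  obtain ⟨v, hv⟩ := nonempty_iInter_of_nonempty_biInter (fun _ => isClosed_descentSet hg)
    (fun n => isBounded_closedBall.subset (hS_ball n))
    (fun N => ⟨x (N + 1), mem_iInter₂.2 fun n hn => hS_anti hn self_mem_descentSet⟩) hS_diam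
  rw [mem_iInter] at hv
  refine ⟨v, ?_, fun y => ?_⟩
  · have hv₀ : v ∈ descentSet g δ x₀ := descentSet_subset hδ.le (hnext_mem 0 x₀) (hv 0)
    have := mul_nonneg hδ.le (dist_nonneg (x := x₀) (y := v))
    simp only [descentSet, mem_ofPred_eq] at hv₀
    linarith
  · by_contra! hy
    have hyS (n : ℕ) : y ∈ S n := descentSet_subset hδ.le (hv n) (by
      simp only [descentSet, mem_ofPred_eq]; linarith)
    have hdist : dist v y ≤ 0 := ge_of_tendsto' hS_diam fun n =>
      dist_le_diam_of_mem (isBounded_closedBall.subset (hS_ball n)) (hv n) (hyS n)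
    have := dist_le_zero.1 hdist
    subst this
    simp at hy

end Ekeland

theorem LowerSemicontinuous.exists_le_forall_le_add_mul_dist_ereal {E : Type*} [MetricSpace E]
    [CompleteSpace E] {g : E → EReal} (hg : LowerSemicontinuous g) {m : ℝ}
    (hm : ∀ y, (m : EReal) ≤ g y) {x₀ : E} (hx₀ : g x₀ ≠ ⊤) {δ : ℝ} (hδ : 0 < δ) :
    ∃ v, g v ≤ g x₀ ∧ ∀ y, g v ≤ g y + (δ * dist v y : ℝ) := by
  have hx₀' : g x₀ = (g x₀).toReal :=
    (EReal.coe_toReal hx₀ (ne_bot_of_le_ne_bot (EReal.coe_ne_bot m) (hm x₀))).symm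
  set C := (g x₀).toReal + 1 with hC
  have hgx₀C : g x₀ ≤ C := by rw [hx₀']; exact EReal.coe_le_coe_iff.2 (by linarith)
  have hmC : m ≤ C := EReal.coe_le_coe_iff.1 ((hm x₀).trans hgx₀C)
  -- Run the real-valued principle on `g` clamped to `[m, C]`; the clamp loses nothing because
  -- the point it produces has `g v ≤ g x₀ < C`.
  obtain ⟨T, hT_mono, hT_cont, hT_eq⟩ := EReal.exists_monotone_continuous_coe_eq_of_mem_Icc hmC
  have hTg (y : E) (hy : g y ≤ C) : (T (g y) : EReal) = g y := hT_eq _ ⟨hm y, hy⟩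
  obtain ⟨v, hv₀, hv⟩ :=
    (hT_cont.comp_lowerSemicontinuous hg hT_mono).exists_le_forall_le_add_mul_dist
      ⟨T ⊥, forall_mem_range.2 fun y => hT_mono bot_le⟩ hδ x₀
  simp only [Function.comp_apply] at hv₀ hv
  have hvC : g v ≤ C := by
    by_contra! h
    have h1 : T C ≤ T (g x₀) := (hT_mono h.le).trans hv₀
    rw [← EReal.coe_le_coe_iff, hT_eq C ⟨EReal.coe_le_coe_iff.2 hmC, le_rfl⟩, hTg x₀ hgx₀C,
      hx₀', EReal.coe_le_coe_iff] at h1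
    linarith
  refine ⟨v, ?_, fun y => ?_⟩
  · rw [← hTg v hvC, ← hTg x₀ hgx₀C]
    exact EReal.coe_le_coe_iff.2 hv₀
  · rcases le_or_gt (g y) C with hy | hy
    · rw [← hTg v hvC, ← hTg y hy, ← EReal.coe_add]
      exact EReal.coe_le_coe_iff.2 (hv y)
    · calc g v ≤ C := hvC
        _ ≤ g y := hy.le
        _ ≤ g y + (δ * dist v y : ℝ) :=
          le_add_of_nonneg_right (EReal.coe_nonneg.2 (by positivity))

theorem LowerSemicontinuous.add_coe {α : Type*} [TopologicalSpace α] {f : α → EReal}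
    (hf : LowerSemicontinuous f) {h : α → ℝ} (hh : Continuous h) :
    LowerSemicontinuous fun x => f x + (h x : EReal) :=
  hf.add' (continuous_coe_real_ereal.comp hh).lowerSemicontinuous fun _ =>
    EReal.continuousAt_add (Or.inr (EReal.coe_ne_bot _)) (Or.inr (EReal.coe_ne_top _))

theorem ConvexOn.erealConvexOn {E : Type*} [AddCommGroup E] [Module ℝ E] {f : E → ℝ}
    (hf : ConvexOn ℝ univ f) : ERealConvexOn fun x => (f x : EReal) := by
  intro x y a b ha hb hab
  rw [← EReal.coe_mul, ← EReal.coe_mul, ← EReal.coe_add, EReal.coe_le_coe_iff]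
  exact hf.2 (mem_univ x) (mem_univ y) ha hb hab

def epigraph {α : Type*} (f : α → EReal) : Set (α × ℝ) :=
  {p | f p.1 ≤ p.2}

theorem ERealConvexOn.convex_epigraph {E : Type*} [AddCommGroup E] [Module ℝ E]
    {f : E → EReal} (hf : ERealConvexOn f) : Convex ℝ (epigraph f) := by
  rintro ⟨y, s⟩ hy ⟨z, t⟩ hz a b ha hb hab
  simp only [epigraph, mem_ofPred_eq, Prod.smul_mk, Prod.mk_add_mk, smul_eq_mul] at hy hz ⊢
  calc f (a • y + b • z) ≤ (a : EReal) * f y + (b : EReal) * f z := hf y z a b ha hb hab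
    _ ≤ (a : EReal) * s + (b : EReal) * t :=
      add_le_add (mul_le_mul_of_nonneg_left hy (EReal.coe_nonneg.2 ha))
        (mul_le_mul_of_nonneg_left hz (EReal.coe_nonneg.2 hb))
    _ = ((a * s + b * t : ℝ) : EReal) := by rw [EReal.coe_add, EReal.coe_mul, EReal.coe_mul]

theorem isClosed_epigraph {α : Type*} [TopologicalSpace α] {f : α → EReal}
    (hf : LowerSemicontinuous f) : IsClosed (epigraph f) :=
  hf.isClosed_epigraph.preimage
    (continuous_fst.prodMk (continuous_coe_real_ereal.comp continuous_snd))

section ConvexAnalysis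

variable {E : Type*} [NormedAddCommGroup E] [NormedSpace ℝ E] {f : E → EReal}

theorem exists_affine_of_separates_epigraph (ψ : E × ℝ →L[ℝ] ℝ) {s : ℝ}
    (hψ : ∀ p ∈ epigraph f, s ≤ ψ p) {x₀ : E} {t₀ t₁ : ℝ} (h₀ : (x₀, t₀) ∈ epigraph f)
    (h₁ : ψ (x₀, t₁) < s) :
    ∃ (x' : E →L[ℝ] ℝ) (c : ℝ), (∀ y, ((x' y + c : ℝ) : EReal) ≤ f y) ∧
      ∀ y t, ψ (y, t) < s → t < x' y + c := by
  set β := ψ (0, 1)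
  have hψ_apply (y : E) (t : ℝ) : ψ (y, t) = ψ (y, 0) + t * β := by
    rw [show (y, t) = (y, (0 : ℝ)) + t • ((0 : E), (1 : ℝ)) by simp, map_add, map_smul,
      smul_eq_mul]
  have hβ : 0 < β := by
    by_contra! hβ
    have h₂ := hψ (x₀, max t₀ t₁) (h₀.trans (EReal.coe_le_coe_iff.2 (le_max_left _ _)))
    rw [hψ_apply] at h₁ h₂
    nlinarith [le_max_right t₀ t₁]
  set x' : E →L[ℝ] ℝ := -β⁻¹ • ψ.comp (ContinuousLinearMap.inl ℝ E ℝ)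
  have key (y : E) (t : ℝ) : s ≤ ψ (y, t) ↔ x' y + s / β ≤ t := by
    have : x' y + s / β = (s - ψ (y, 0)) / β := by
      simp only [x', smul_apply, ContinuousLinearMap.comp_apply, ContinuousLinearMap.inl_apply,
        smul_eq_mul]
      field_simp
      ring
    rw [this, div_le_iff₀ hβ, hψ_apply]
    constructor <;> intro h <;> linarith
  refine ⟨x', s / β, fun y => EReal.le_of_forall_lt_iff_le.1 fun t ht => ?_,
    fun y t h => lt_of_not_ge fun h' => h.not_ge ((key y t).2 h')⟩
  exact EReal.coe_le_coe_iff.2 ((key y t).1 (hψ (y, t) ht.le))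

theorem exists_affine_le (hf : ERealConvexOn f) (hlsc : LowerSemicontinuous f) {x₀ : E}
    {a : ℝ} (hx₀ : f x₀ = a) : ∃ (w : E →L[ℝ] ℝ) (c : ℝ), ∀ y, ((w y + c : ℝ) : EReal) ≤ f y := by
  have hnot : (x₀, a - 1) ∉ epigraph f := by
    simp only [epigraph, mem_ofPred_eq, hx₀, EReal.coe_le_coe_iff, not_le]
    linarith
  obtain ⟨ψ, s, hψx₀, hψ⟩ :=
    geometric_hahn_banach_point_closed hf.convex_epigraph (isClosed_epigraph hlsc) hnot
  obtain ⟨w, c, hwc, -⟩ := exists_affine_of_separates_epigraph ψ (fun p hp => (hψ p hp).le)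
    (show (x₀, a) ∈ epigraph f by simp [epigraph, hx₀]) hψx₀
  exact ⟨w, c, hwc⟩

theorem exists_mem_subdiff_of_forall_le_add (hf : ERealConvexOn f) {q : E → ℝ}
    (hq : ConvexOn ℝ univ q) (hqc : Continuous q) {v : E} {a : ℝ} (hfv : f v = a)
    (hmin : ∀ y, f v + q v ≤ f y + q y) :
    ∃ x' : E →L[ℝ] ℝ, (v, x') ∈ subdiff f ∧ ∀ y, q v - x' (y - v) ≤ q y := by
  set B : Set (E × ℝ) := {p | p.2 < a + q v - q p.1}
  have hB_open : IsOpen B := isOpen_lt continuous_snd (by fun_prop)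
  have hB_conv : Convex ℝ B := by
    convert (hq.neg.add_const (a + q v)).convex_strict_hypograph using 1
    ext p
    simp only [B, mem_ofPred_eq, mem_univ, true_and, Pi.add_apply, Pi.neg_apply]
    constructor <;> intro h <;> linarith
  have hdisj : Disjoint B (epigraph f) := by
    refine Set.disjoint_left.2 fun p hpB hpA => (hmin p.1).not_gt ?_
    calc f p.1 + q p.1 ≤ (p.2 : EReal) + q p.1 := add_le_add_left hpA _
      _ < f v + q v := by
        rw [hfv, ← EReal.coe_add, ← EReal.coe_add, EReal.coe_lt_coe_iff]
        simp only [B, mem_ofPred_eq] at hpB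
        linarith
  obtain ⟨ψ, s, hψB, hψA⟩ :=
    geometric_hahn_banach_open hB_conv hB_open hf.convex_epigraph hdisj
  obtain ⟨x', c, hminor, hmajor⟩ := exists_affine_of_separates_epigraph ψ hψA
    (show (v, a) ∈ epigraph f by simp [epigraph, hfv]) (hψB (v, a - 1) (by simp [B]))
  have hmajor' (y : E) : a + q v - q y ≤ x' y + c :=
    le_of_forall_lt fun t ht => hmajor y t (hψB (y, t) ht)
  have hc : c = a - x' v := by
    have := hminor v
    rw [hfv, EReal.coe_le_coe_iff] at this
    linarith [hmajor' v]
  refine ⟨x', fun y => ?_, fun y => ?_⟩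
  · rw [hfv, ← EReal.coe_add, map_sub, show x' y - x' v + a = x' y + c by rw [hc]; ring]
    exact hminor y
  · rw [map_sub]
    linarith [hmajor' y]

theorem ContinuousLinearMap.opNorm_le_of_forall_apply_le {e : E →L[ℝ] ℝ} {ε : ℝ}
    (hε : 0 ≤ ε) (h : ∀ w, e w ≤ ε * ‖w‖) : ‖e‖ ≤ ε := by
  refine e.opNorm_le_bound hε fun w => abs_le.2 ⟨?_, h w⟩
  have := h (-w)
  rw [map_neg, norm_neg] at this
  linarith

theorem exists_forall_le_sq_norm_div_two_add (ℓ : E →L[ℝ] ℝ) :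
    ∃ m, ∀ y, m ≤ ‖y‖ ^ 2 / 2 + ℓ y := by
  refine ⟨-‖ℓ‖ ^ 2 / 2, fun y => ?_⟩
  have := neg_le_of_abs_le (ℓ.le_opNorm y)
  nlinarith [sq_nonneg (‖y‖ - ‖ℓ‖)]

theorem mem_dualityMap_of_mem_subdiff {v : E} {y' : E →L[ℝ] ℝ}
    (h : (v, y') ∈ subdiff fun y => ((‖y‖ ^ 2 / 2 : ℝ) : EReal)) : y' ∈ dualityMap v := by
  have hsub (w : E) : y' w ≤ ‖v + w‖ ^ 2 / 2 - ‖v‖ ^ 2 / 2 := by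
    have := h (v + w)
    rw [← EReal.coe_add, EReal.coe_le_coe_iff, add_sub_cancel_left] at this
    linarith
  have hle (w : E) : y' w ≤ ‖v‖ * ‖w‖ :=
    le_of_forall_pos_le_add_mul (c := ‖w‖ ^ 2 / 2) fun t ht => by
    have h₁ := hsub (t • w)
    have h₂ : ‖v + t • w‖ ≤ ‖v‖ + t * ‖w‖ := by
      simpa [norm_smul, abs_of_pos ht] using norm_add_le v (t • w)
    rw [map_smul, smul_eq_mul] at h₁
    have : t * y' w ≤ t * (‖v‖ * ‖w‖ + t * (‖w‖ ^ 2 / 2)) := by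
      nlinarith [norm_nonneg (v + t • w), norm_nonneg v, norm_nonneg w]
    exact le_of_mul_le_mul_left this ht
  have hge : ‖v‖ ^ 2 ≤ y' v := le_of_forall_pos_le_add_mul (c := ‖v‖ ^ 2 / 2) fun t ht => by
    have h₁ := hsub (-t • v)
    rw [show v + -t • v = (1 - t) • v by module, norm_smul, mul_pow, Real.norm_eq_abs, sq_abs,
      map_smul, smul_eq_mul] at h₁
    nlinarith
  have hnorm : ‖y'‖ ≤ ‖v‖ := y'.opNorm_le_of_forall_apply_le (norm_nonneg v) hle
  have hv : y' v = ‖v‖ ^ 2 := le_antisymm (by simpa [sq] using hle v) hge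
  have hv' : ‖v‖ ^ 2 ≤ ‖y'‖ * ‖v‖ := hv ▸ (le_abs_self _).trans (y'.le_opNorm v)
  refine ⟨hv, ?_⟩
  nlinarith [norm_nonneg y', norm_nonneg v]

theorem convexOn_univ_sq_norm_div_two : ConvexOn ℝ univ fun y : E => ‖y‖ ^ 2 / 2 := by
  simpa [div_eq_inv_mul] using
    (convexOn_univ_norm.pow (fun _ _ => norm_nonneg _) 2).smul (c := (2⁻¹ : ℝ)) (by norm_num)

theorem exists_forall_le_add_sq_norm_div_two_sub (hf : ERealConvexOn f)
    (hlsc : LowerSemicontinuous f) {x₀ : E} {a : ℝ} (hx₀ : f x₀ = a) (z' : E →L[ℝ] ℝ)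
    {lam : ℝ} (hlam : 0 < lam) :
    ∃ m : ℝ, ∀ y, (m : EReal) ≤ f y + (lam⁻¹ * (‖y‖ ^ 2 / 2 - z' y) : ℝ) := by
  obtain ⟨w, c, hwc⟩ := exists_affine_le hf hlsc hx₀
  obtain ⟨m, hm⟩ := exists_forall_le_sq_norm_div_two_add (lam • w - z')
  refine ⟨c + lam⁻¹ * m, fun y => ?_⟩
  have : lam⁻¹ * m ≤ w y + lam⁻¹ * (‖y‖ ^ 2 / 2 - z' y) := calc
    lam⁻¹ * m ≤ lam⁻¹ * (‖y‖ ^ 2 / 2 + (lam • w - z') y) :=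
      mul_le_mul_of_nonneg_left (hm y) (inv_nonneg.2 hlam.le)
    _ = w y + lam⁻¹ * (‖y‖ ^ 2 / 2 - z' y) := by
      simp only [sub_apply, smul_apply, smul_eq_mul]
      field_simp
      ring
  calc ((c + lam⁻¹ * m : ℝ) : EReal)
      ≤ ((w y + c : ℝ) : EReal) + (lam⁻¹ * (‖y‖ ^ 2 / 2 - z' y) : ℝ) := by
        rw [← EReal.coe_add, EReal.coe_le_coe_iff]
        linarith
    _ ≤ f y + (lam⁻¹ * (‖y‖ ^ 2 / 2 - z' y) : ℝ) := add_le_add_left (hwc y) _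

theorem exists_mem_dualityMap_norm_sub_le {u : E →L[ℝ] ℝ} {v : E} {ε : ℝ} (hε : 0 ≤ ε)
    (h : ∀ y, ‖v‖ ^ 2 / 2 - u v ≤ ‖y‖ ^ 2 / 2 - u y + ε * dist y v) :
    ∃ y' ∈ dualityMap v, ‖u - y'‖ ≤ ε := by
  obtain ⟨y', hy', hq⟩ := exists_mem_subdiff_of_forall_le_add (v := v)
    convexOn_univ_sq_norm_div_two.erealConvexOn (q := fun y => ε * dist y v - u y)
    (((convexOn_univ_dist v).smul hε).sub (u.toLinearMap.concaveOn convex_univ)) (by fun_prop)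
    rfl
    fun y => by
      rw [← EReal.coe_add, ← EReal.coe_add, EReal.coe_le_coe_iff, dist_self, mul_zero]
      linarith [h y]
  refine ⟨y', mem_dualityMap_of_mem_subdiff hy',
    (u - y').opNorm_le_of_forall_apply_le hε fun w => ?_⟩
  have := hq (v + w)
  simp only [dist_self, mul_zero, zero_sub, add_sub_cancel_left, dist_eq_norm, map_add] at this
  rw [sub_apply]
  linarith

theorem exists_mem_subdiff_forall_le_add_mul_dist [CompleteSpace E] (hproper : ProperFn f)
    (hconv : ERealConvexOn f) (hlsc : LowerSemicontinuous f) {lam : ℝ} (hlam : 0 < lam)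
    (z' : E →L[ℝ] ℝ) {ε : ℝ} (hε : 0 < ε) :
    ∃ (v : E) (x' : E →L[ℝ] ℝ), (v, x') ∈ subdiff f ∧ ∀ y,
      ‖v‖ ^ 2 / 2 - (z' - lam • x') v ≤ ‖y‖ ^ 2 / 2 - (z' - lam • x') y + ε * dist y v := by
  obtain ⟨hbot, x₀, hx₀⟩ := hproper
  have hfin (x : E) (hx : f x ≠ ⊤) : f x = (f x).toReal := (EReal.coe_toReal hx (hbot x)).symm
  set h₀ : E → ℝ := fun y => lam⁻¹ * (‖y‖ ^ 2 / 2 - z' y)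
  obtain ⟨m, hm⟩ := exists_forall_le_add_sq_norm_div_two_sub hconv hlsc (hfin x₀ hx₀) z' hlam
  obtain ⟨v, hv₀, hv⟩ :=
    (hlsc.add_coe (by fun_prop : Continuous h₀)).exists_le_forall_le_add_mul_dist_ereal hm
      (by rw [hfin x₀ hx₀, ← EReal.coe_add]; exact EReal.coe_ne_top _) (div_pos hε hlam)
  have hfv : f v ≠ ⊤ := fun h => by
    rw [h, EReal.top_add_coe, top_le_iff, hfin x₀ hx₀, ← EReal.coe_add] at hv₀
    exact EReal.coe_ne_top _ hv₀
  obtain ⟨x', hx', hq⟩ := exists_mem_subdiff_of_forall_le_add hconv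
    (q := fun y => h₀ y + ε / lam * dist y v)
    (((convexOn_univ_sq_norm_div_two.sub (z'.toLinearMap.concaveOn convex_univ)).smul
      (inv_nonneg.2 hlam.le)).add ((convexOn_univ_dist v).smul (div_pos hε hlam).le))
    (by fun_prop) (hfin v hfv) fun y => by simpa [EReal.coe_add, add_assoc, dist_comm] using hv y
  refine ⟨v, x', hx', fun y => ?_⟩
  have := hq y
  simp only [h₀, dist_self, mul_zero, add_zero, map_sub] at this
  simp only [sub_apply, smul_apply, smul_eq_mul]
  field_simp at this
  linarith

end ConvexAnalysis

/-- the closure of the range of `J_X + λ∂φ` is all of `X*`. -/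
theorem closure_range_eq (φ : X → EReal) (hproper : ProperFn φ)
    (hconv : ERealConvexOn φ) (hlsc : LowerSemicontinuous φ) :
    ∀ lam : ℝ, 0 < lam → ∀ z' : X →L[ℝ] ℝ, ∀ ε : ℝ, 0 < ε →
      ∃ (x : X) (y' x' : X →L[ℝ] ℝ),
        y' ∈ dualityMap x ∧ (x, x') ∈ subdiff φ ∧ ‖z' - (y' + lam • x')‖ ≤ ε := by
  intro lam hlam z' ε hε
  obtain ⟨v, x', hx', hv⟩ :=
    exists_mem_subdiff_forall_le_add_mul_dist hproper hconv hlsc hlam z' hε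
  obtain ⟨y', hy', hnorm⟩ := exists_mem_dualityMap_norm_sub_le hε.le hv
  refine ⟨v, y', x', hy', hx', ?_⟩
  rwa [add_comm, ← sub_sub]
end
end

section
/- Let A : X ⇉ X* be a monotone operator with Fitzpatrick function H. If (x, x*) ∈ A then (x*, x) ∈ ∂H(x, x*), where the subdifferential of H : X × X* → (-∞, +∞] at (x, x*) is taken in X* × X** (identifying the pairing ⟨(x*, x), (z, z*)⟩ = ⟨z, x*⟩ + ⟨x, z*⟩). -/
noncomputable section

variable {X : Type*} [NormedAddCommGroup X] [NormedSpace ℝ X] [CompleteSpace X]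

omit [CompleteSpace X] in
theorem le_fitz_of_mem {A : Set (X × (X →L[ℝ] ℝ))} {q : X × (X →L[ℝ] ℝ)} (hq : q ∈ A)
    (p : X × (X →L[ℝ] ℝ)) : ((p.2 q.1 + q.2 p.1 - q.2 q.1 : ℝ) : EReal) ≤ fitz A p :=
  le_iSup₂_of_le q hq le_rfl

omit [CompleteSpace X] in
theorem fitz_le_of_monotonicallyRelated {A : Set (X × (X →L[ℝ] ℝ))} {p : X × (X →L[ℝ] ℝ)}
    (hp : ∀ q ∈ A, 0 ≤ (p.2 - q.2) (p.1 - q.1)) : fitz A p ≤ ((p.2 p.1 : ℝ) : EReal) := by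
  refine iSup₂_le fun q hq => EReal.coe_le_coe_iff.mpr ?_
  have h := hp q hq
  simp only [sub_apply, map_sub] at h
  linarith

omit [CompleteSpace X] in
theorem fitz_eq_of_mem {A : Set (X × (X →L[ℝ] ℝ))} (hA : MonotoneSet A)
    {p : X × (X →L[ℝ] ℝ)} (hp : p ∈ A) : fitz A p = ((p.2 p.1 : ℝ) : EReal) :=
  le_antisymm (fitz_le_of_monotonicallyRelated fun q hq => hA p hp q hq)
    (le_trans (by norm_num) (le_fitz_of_mem hp p))

theorem mem_subdiffFitz_of_mem_general (A : Set (X × (X →L[ℝ] ℝ)))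
    (hmono : MonotoneSet A) :
    ∀ p ∈ A, inSubdiffFitz A p.1 p.2 p.2 p.1 := by
  rintro ⟨x, x'⟩ hp z z'
  rw [fitz_eq_of_mem hmono hp, ← EReal.coe_add]
  -- the affine minorant of `H_A` contributed by `(x, x*)` itself touches `H_A` at `(x, x*)`
  convert le_fitz_of_mem hp (z, z') using 2
  simp only [map_sub, sub_apply]
  ring

/-- for a monotone operator, `(x, x*) ∈ A` implies `(x*, x) ∈ ∂H(x, x*)`. -/
theorem mem_subdiffFitz_of_mem (A : Set (X × (X →L[ℝ] ℝ))) (hne : A.Nonempty)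
    (hmono : MonotoneSet A) :
    ∀ p ∈ A, inSubdiffFitz A p.1 p.2 p.2 p.1 :=
  mem_subdiffFitz_of_mem_general A hmono
end
end

section
/- Let A : X ⇉ X* be a maximal monotone operator with Fitzpatrick function H. Then the following are equivalent: (a) (x, x*) ∈ A; (b) H(x, x*) = ⟨x, x*⟩; (c) there exists (u, u*) with (x*, x) ∈ ∂H(u, u*) and ⟨u - x, u* - x*⟩ ≥ 0; (d) (x*, x) ∈ ∂H(x, x*). -/
/-! Maximality makes `H(x, x*) ≥ ⟨x, x*⟩` everywhere, with equality exactly on `A`: monotonicity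
gives `≤` on `A`, and `H(x, x*) ≤ ⟨x, x*⟩` says that `(x, x*)` is monotonically related to all of
`A`. For (c) ⇒ (a), test the subgradient inequality at `(y, y*) ∈ A`, where `H = ⟨y, y*⟩`, and
use `H(u, u*) ≥ ⟨u, u*⟩`: what comes out is `⟨x - y, x* - y*⟩ ≥ ⟨u - x, u* - x*⟩ ≥ 0`. -/

noncomputable section

variable {X : Type*} [NormedAddCommGroup X] [NormedSpace ℝ X] [CompleteSpace X]

section

variable {E : Type*} [NormedAddCommGroup E] [NormedSpace ℝ E] {A : Set (E × (E →L[ℝ] ℝ))}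
  {x : E} {x' : E →L[ℝ] ℝ}

lemma le_fitz (p : E × (E →L[ℝ] ℝ)) {q : E × (E →L[ℝ] ℝ)} (hq : q ∈ A) :
    ((p.2 q.1 + q.2 p.1 - q.2 q.1 : ℝ) : EReal) ≤ fitz A p :=
  le_iSup₂ (f := fun q (_ : q ∈ A) => ((p.2 q.1 + q.2 p.1 - q.2 q.1 : ℝ) : EReal)) q hq

namespace MonotoneSet

theorem fitz_eq_of_mem (hA : MonotoneSet A) (hx : (x, x') ∈ A) :
    fitz A (x, x') = ((x' x : ℝ) : EReal) := by
  refine le_antisymm (iSup₂_le fun q hq => ?_) (by simpa using le_fitz (x, x') hx)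
  have hmono := hA (x, x') hx q hq
  simp only [sub_apply, map_sub] at hmono
  exact EReal.coe_le_coe_iff.mpr (by linarith)

theorem inSubdiffFitz_of_mem (hA : MonotoneSet A) (hx : (x, x') ∈ A) :
    inSubdiffFitz A x x' x' x := by
  intro z z'
  have hpair : x' (z - x) + (z' - x') x + x' x = z' x + x' z - x' x := by
    simp only [map_sub, sub_apply]
    ring
  rw [hA.fitz_eq_of_mem hx, ← EReal.coe_add, hpair]
  exact le_fitz (z, z') hx

end MonotoneSet

namespace MaximalMonotoneSet

theorem mem_of_fitz_le (hA : MaximalMonotoneSet A) (h : fitz A (x, x') ≤ ((x' x : ℝ) : EReal)) :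
    (x, x') ∈ A := by
  refine hA.2 (x, x') fun q hq => ?_
  have hq' := EReal.coe_le_coe_iff.mp ((le_fitz (x, x') hq).trans h)
  simp only [sub_apply, map_sub]
  linarith

theorem apply_le_fitz (hA : MaximalMonotoneSet A) (x : E) (x' : E →L[ℝ] ℝ) :
    ((x' x : ℝ) : EReal) ≤ fitz A (x, x') := by
  by_contra! h
  exact h.ne (hA.1.fitz_eq_of_mem (hA.mem_of_fitz_le h.le))

theorem mem_of_inSubdiffFitz (hA : MaximalMonotoneSet A) {u : E} {u' : E →L[ℝ] ℝ}
    (hsub : inSubdiffFitz A u u' x' x) (hux : 0 ≤ (u' - x') (u - x)) : (x, x') ∈ A := by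
  refine hA.2 (x, x') fun q hq => ?_
  have htest : ((x' (q.1 - u) + (q.2 - u') x + u' u : ℝ) : EReal) ≤ ((q.2 q.1 : ℝ) : EReal) := by
    rw [EReal.coe_add, ← hA.1.fitz_eq_of_mem hq]
    exact (add_le_add_right (hA.apply_le_fitz u u') _).trans (hsub q.1 q.2)
  have htest' := EReal.coe_le_coe_iff.mp htest
  simp only [map_sub, sub_apply] at htest' hux ⊢
  linarith

end MaximalMonotoneSet

end

/-- Fitzpatrick's theorem: the four characterizations are equivalent. -/
theorem fitz_tfae (A : Set (X × (X →L[ℝ] ℝ))) (hA : MaximalMonotoneSet A)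
    (x : X) (x' : X →L[ℝ] ℝ) :
    List.TFAE [
      (x, x') ∈ A,
      fitz A (x, x') = ((x' x : ℝ) : EReal),
      ∃ (u : X) (u' : X →L[ℝ] ℝ),
        inSubdiffFitz A u u' x' x ∧ 0 ≤ (u' - x') (u - x),
      inSubdiffFitz A x x' x' x ] := by
  tfae_have 1 → 2 := hA.1.fitz_eq_of_mem
  tfae_have 2 → 1 := fun h => hA.mem_of_fitz_le h.le
  tfae_have 1 → 4 := hA.1.inSubdiffFitz_of_mem
  tfae_have 4 → 3 := fun h => ⟨x, x', h, by simp⟩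
  tfae_have 3 → 1 := fun ⟨_, _, hsub, hux⟩ => hA.mem_of_inSubdiffFitz hsub hux
  tfae_finish
end
end

section
/- Rockafellar's surjectivity theorem: Let X be a reflexive real Banach space and A : X ⇉ X* a maximal monotone operator. Then for all λ > 0, R(J_X + λA) = X*: for every z* ∈ X* there exist x ∈ X, y* ∈ J_X(x), x* ∈ A(x) with z* = y* + λx*. -/
noncomputable section

variable {X : Type*} [NormedAddCommGroup X] [NormedSpace ℝ X] [CompleteSpace X]

/-! Replacing `A` by `B = {(x, λx* - z*) : (x, x*) ∈ A}`, which is again maximal monotone, it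
suffices to find `(w, φ) ∈ B` with `-φ ∈ J(w)`. For maximal monotone `B` the Fitzpatrick function
dominates the pairing `⟨x, x*⟩ ≥ -(‖x‖² + ‖x*‖²)/2`, so Hahn–Banach yields a continuous affine
function `(x, x*) ↦ φ x + ξ x* + v` lying between the concave function `-(‖x‖² + ‖x*‖²)/2` and the
epigraph of the Fitzpatrick function. The lower bound gives `‖φ‖²/2 + ‖ξ‖²/2 ≤ v` (the quadratic
`‖·‖²/2` is its own conjugate); reflexivity writes `ξ` as evaluation at some `w`; the upper bound
then shows that `(w, φ)` is monotonically related to `B`, hence lies in `B`, and evaluating there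
forces `φ w = -‖w‖²` and `‖φ‖ = ‖w‖`. -/

section Sandwich

variable {E : Type*} [AddCommGroup E] [Module ℝ E] [TopologicalSpace E]
  [IsTopologicalAddGroup E] [ContinuousSMul ℝ E]

theorem exists_affine_between_of_concaveOn_le {f : E → ℝ} (hf : ConcaveOn ℝ Set.univ f)
    (hfc : Continuous f) {C : Set (E × ℝ)} (hC : Convex ℝ C) (hCne : C.Nonempty)
    (hfC : ∀ pt ∈ C, f pt.1 ≤ pt.2) :
    ∃ (ℓ : E →L[ℝ] ℝ) (v : ℝ), (∀ x, f x ≤ ℓ x + v) ∧ ∀ pt ∈ C, ℓ pt.1 + v ≤ pt.2 := by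
  have hO : Convex ℝ {pt : E × ℝ | pt.2 < f pt.1} := by
    simpa using hf.convex_strict_hypograph
  have hOopen : IsOpen {pt : E × ℝ | pt.2 < f pt.1} :=
    isOpen_lt continuous_snd (hfc.comp continuous_fst)
  have hdisj : Disjoint {pt : E × ℝ | pt.2 < f pt.1} C :=
    Set.disjoint_left.2 fun pt hlt hpt => (hfC pt hpt).not_gt hlt
  obtain ⟨F, u, hFO, hFC⟩ := geometric_hahn_banach_open hO hOopen hC hdisj
  set g : E →L[ℝ] ℝ := F.comp (.inl ℝ E ℝ)
  set c : ℝ := F (0, 1)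
  have hF : ∀ pt : E × ℝ, F pt = g pt.1 + c * pt.2 := fun pt => by
    have hvert : F (0, pt.2) = c * pt.2 := by
      rw [mul_comm, ← smul_eq_mul, ← map_smul, Prod.smul_mk, smul_zero, smul_eq_mul, mul_one]
    rw [← F.comp_inl_add_comp_inr pt, ContinuousLinearMap.comp_apply (g := F), ← hvert]
    rfl
  -- the separating hyperplane is not vertical: a point of `C` lies above points of the hypograph
  have hc : 0 < c := by
    by_contra! hc
    obtain ⟨⟨x₀, t₀⟩, h₀⟩ := hCne
    have hbelow := hFO (x₀, min (f x₀) t₀ - 1) (by simp; linarith [min_le_left (f x₀) t₀])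
    have habove := hFC _ h₀
    rw [hF] at hbelow habove
    nlinarith [min_le_right (f x₀) t₀]
  refine ⟨-c⁻¹ • g, u / c, fun x => le_of_forall_lt fun t ht => ?_, fun pt hpt => ?_⟩
  · have := hFO (x, t) ht
    rw [hF] at this
    simp only [smul_apply, smul_eq_mul]
    rw [← sub_pos] at this ⊢
    field_simp
    linarith
  · have := hFC pt hpt
    rw [hF] at this
    simp only [smul_apply, smul_eq_mul]
    field_simp
    linarith

end Sandwich

section Normed

variable {E : Type*} [NormedAddCommGroup E] [NormedSpace ℝ E]

theorem ContinuousLinearMap.half_sq_opNorm_le (h : E →L[ℝ] ℝ) {r : ℝ}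
    (H : ∀ x, h x - ‖x‖ ^ 2 / 2 ≤ r) : ‖h‖ ^ 2 / 2 ≤ r := by
  have hr : 0 ≤ r := by simpa using H 0
  have hbound : ∀ x, ‖h x‖ ≤ √(2 * r) * ‖x‖ := fun x => by
    have hdiscrim : discrim (‖x‖ ^ 2 / 2) (-h x) r ≤ 0 := discrim_le_zero fun t => by
      have := H (t • x)
      rw [map_smul, smul_eq_mul, norm_smul, mul_pow, Real.norm_eq_abs, sq_abs] at this
      linarith
    rw [discrim] at hdiscrim
    rw [Real.norm_eq_abs]
    refine abs_le_of_sq_le_sq ?_ (by positivity)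
    rw [mul_pow, Real.sq_sqrt (by positivity)]
    linarith
  have hnorm : ‖h‖ ≤ √(2 * r) := h.opNorm_le_bound (Real.sqrt_nonneg _) hbound
  nlinarith [Real.sq_sqrt (by positivity : 0 ≤ 2 * r), norm_nonneg h]

theorem ContinuousLinearMap.neg_opNorm_mul_norm_le (a : E →L[ℝ] ℝ) (x : E) :
    -(‖a‖ * ‖x‖) ≤ a x :=
  neg_le_of_abs_le (a.le_opNorm x)

theorem ContinuousLinearMap.neg_half_sq_add_half_sq_le (a : E →L[ℝ] ℝ) (x : E) :
    -(‖x‖ ^ 2 / 2 + ‖a‖ ^ 2 / 2) ≤ a x := by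
  nlinarith [a.neg_opNorm_mul_norm_le x, sq_nonneg (‖x‖ - ‖a‖)]

theorem convexOn_univ_half_sq_norm : ConvexOn ℝ Set.univ fun x : E => ‖x‖ ^ 2 / 2 :=
  ((convexOn_univ_norm.pow (fun x _ => norm_nonneg x) 2).smul
    (by norm_num : (0 : ℝ) ≤ 1 / 2)).congr fun x _ => by simp; ring

theorem ContinuousLinearMap.sub_apply_sub (a b : E →L[ℝ] ℝ) (x y : E) :
    (a - b) (x - y) = a x - (a y + b x - b y) := by
  simp only [sub_apply, map_sub]
  ring

variable {A : Set (E × (E →L[ℝ] ℝ))}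

theorem fitz_le_coe_iff {p : E × (E →L[ℝ] ℝ)} {t : ℝ} :
    fitz A p ≤ t ↔ ∀ q ∈ A, p.2 q.1 + q.2 p.1 - q.2 q.1 ≤ t := by
  simp only [fitz, iSup₂_le_iff, EReal.coe_le_coe_iff]

theorem MonotoneSet.fitz_le_apply (hA : MonotoneSet A) {p : E × (E →L[ℝ] ℝ)} (hp : p ∈ A) :
    fitz A p ≤ (p.2 p.1 : ℝ) :=
  fitz_le_coe_iff.2 fun q hq => by
    have := hA p hp q hq
    rw [ContinuousLinearMap.sub_apply_sub] at this
    linarith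

theorem MaximalMonotoneSet.mem_of_fitz_le_apply (hA : MaximalMonotoneSet A)
    {p : E × (E →L[ℝ] ℝ)} (hp : fitz A p ≤ (p.2 p.1 : ℝ)) : p ∈ A :=
  hA.2 p fun q hq => by
    have := fitz_le_coe_iff.1 hp q hq
    rw [ContinuousLinearMap.sub_apply_sub]
    linarith

theorem MaximalMonotoneSet.apply_le_fitz_s16 (hA : MaximalMonotoneSet A) (p : E × (E →L[ℝ] ℝ)) :
    (p.2 p.1 : EReal) ≤ fitz A p := by
  by_contra! hlt
  have hpA := hA.mem_of_fitz_le_apply hlt.le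
  exact hlt.not_ge (le_iSup₂_of_le p hpA (by simp))

theorem convex_setOf_fitz_le :
    Convex ℝ {pt : (E × (E →L[ℝ] ℝ)) × ℝ | fitz A pt.1 ≤ pt.2} := by
  intro pt hpt pt' hpt' a b ha hb hab
  simp only [Set.mem_ofPred_eq, fitz_le_coe_iff] at hpt hpt' ⊢
  intro q hq
  have h := mul_le_mul_of_nonneg_left (hpt q hq) ha
  have h' := mul_le_mul_of_nonneg_left (hpt' q hq) hb
  have hsplit : q.2 q.1 = a * q.2 q.1 + b * q.2 q.1 := by rw [← add_mul, hab, one_mul]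
  simp only [Prod.fst_add, Prod.snd_add, Prod.smul_fst, Prod.smul_snd,
    add_apply, smul_apply, map_add, map_smul, smul_eq_mul]
  linarith

theorem MaximalMonotoneSet.nonempty (hA : MaximalMonotoneSet A) : A.Nonempty :=
  Set.nonempty_iff_ne_empty.2 fun hempty => by
    subst hempty
    exact hA.2 0 (by simp)

theorem MaximalMonotoneSet.image_smul_sub (hA : MaximalMonotoneSet A) {lam : ℝ} (hlam : 0 < lam)
    (z : E →L[ℝ] ℝ) : MaximalMonotoneSet ((fun q => (q.1, lam • q.2 - z)) '' A) := by
  have hscale : ∀ a b : E →L[ℝ] ℝ, lam • a - z - (lam • b - z) = lam • (a - b) :=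
    fun a b => by module
  constructor
  · rintro _ ⟨p, hp, rfl⟩ _ ⟨q, hq, rfl⟩
    simpa only [hscale, smul_apply, smul_eq_mul] using mul_nonneg hlam.le (hA.1 p hp q hq)
  · intro p hp
    refine ⟨(p.1, lam⁻¹ • (p.2 + z)), hA.2 _ fun q hq => ?_, ?_⟩
    · have := hp _ ⟨q, hq, rfl⟩
      rwa [show p.2 - (lam • q.2 - z) = lam • (lam⁻¹ • (p.2 + z) - q.2) by
          rw [smul_sub, smul_smul, mul_inv_cancel₀ hlam.ne', one_smul]; abel,
        smul_apply, smul_eq_mul, mul_nonneg_iff_of_pos_left hlam] at this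
    · simp [smul_smul, mul_inv_cancel₀ hlam.ne']

theorem MaximalMonotoneSet.exists_affine_between (hA : MaximalMonotoneSet A) :
    ∃ (φ : E →L[ℝ] ℝ) (ξ : (E →L[ℝ] ℝ) →L[ℝ] ℝ) (v : ℝ),
      (∀ x y, -(‖x‖ ^ 2 / 2 + ‖y‖ ^ 2 / 2) ≤ φ x + ξ y + v) ∧
        ∀ q ∈ A, φ q.1 + ξ q.2 + v ≤ q.2 q.1 := by
  have hconcave : ConcaveOn ℝ Set.univ
      fun p : E × (E →L[ℝ] ℝ) => -(‖p.1‖ ^ 2 / 2 + ‖p.2‖ ^ 2 / 2) :=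
    ((convexOn_univ_half_sq_norm.comp_linearMap (.fst ℝ _ _)).add
      (convexOn_univ_half_sq_norm.comp_linearMap (.snd ℝ _ _))).neg
  obtain ⟨p₀, hp₀⟩ := hA.nonempty
  obtain ⟨ℓ, v, hbelow, habove⟩ := exists_affine_between_of_concaveOn_le hconcave (by fun_prop)
    convex_setOf_fitz_le ⟨(p₀, p₀.2 p₀.1), hA.1.fitz_le_apply hp₀⟩
    fun pt hpt => (pt.1.2.neg_half_sq_add_half_sq_le pt.1.1).trans
      (EReal.coe_le_coe_iff.1 ((hA.apply_le_fitz_s16 pt.1).trans hpt))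
  refine ⟨ℓ.comp (.inl ℝ _ _), ℓ.comp (.inr ℝ _ _), v, fun x y => ?_, fun q hq => ?_⟩
  · exact (hbelow (x, y)).trans_eq (by rw [← ℓ.comp_inl_add_comp_inr (x, y)])
  · exact (habove (q, q.2 q.1) (hA.1.fitz_le_apply hq)).trans_eq' (by
      rw [← ℓ.comp_inl_add_comp_inr q])

theorem MaximalMonotoneSet.exists_neg_mem_dualityMap
    (hrefl : Function.Surjective (NormedSpace.inclusionInDoubleDual ℝ E))
    (hA : MaximalMonotoneSet A) : ∃ p ∈ A, -p.2 ∈ dualityMap p.1 := by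
  obtain ⟨φ, ξ, v, hbelow, habove⟩ := hA.exists_affine_between
  have hφ : ∀ y, ‖φ‖ ^ 2 / 2 ≤ v + ξ y + ‖y‖ ^ 2 / 2 := fun y => by
    simpa using (-φ).half_sq_opNorm_le fun x => by
      simp only [neg_apply]; linarith [hbelow x y]
  have hξ : ‖ξ‖ ^ 2 / 2 ≤ v - ‖φ‖ ^ 2 / 2 := by
    simpa using (-ξ).half_sq_opNorm_le (r := v - ‖φ‖ ^ 2 / 2) fun y => by
      simp only [neg_apply]; linarith [hφ y]
  obtain ⟨w, hw⟩ := hrefl ξ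
  have hξw : ∀ a, ξ a = a w := fun a => by rw [← hw]; rfl
  have hv : ‖φ‖ ^ 2 / 2 + ‖w‖ ^ 2 / 2 ≤ v := by
    have hnorm : ‖ξ‖ = ‖w‖ := by
      rw [← hw]; exact (NormedSpace.inclusionInDoubleDualLi ℝ).norm_map w
    rw [hnorm] at hξ
    linarith
  have hφw := φ.neg_opNorm_mul_norm_le w
  have hmem : (w, φ) ∈ A := hA.2 _ fun q hq => by
    have := habove q hq
    rw [hξw] at this
    rw [ContinuousLinearMap.sub_apply_sub]
    nlinarith [sq_nonneg (‖φ‖ - ‖w‖)]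
  have hle := habove _ hmem
  rw [hξw] at hle
  have hφn : ‖φ‖ = ‖w‖ := by nlinarith [sq_nonneg (‖φ‖ - ‖w‖)]
  refine ⟨(w, φ), hmem, ?_, ?_⟩
  · simp only [neg_apply]; nlinarith
  · rw [norm_neg, hφn]

end Normed

/-- Rockafellar's surjectivity theorem: for reflexive `X` and maximal
monotone `A`, `R(J_X + λA) = X*` for all `λ > 0`. -/
theorem rockafellar_surjectivity
    (hrefl : Function.Surjective (NormedSpace.inclusionInDoubleDual ℝ X))
    (A : Set (X × (X →L[ℝ] ℝ))) (hA : MaximalMonotoneSet A) :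
    ∀ lam : ℝ, 0 < lam → ∀ z' : X →L[ℝ] ℝ,
      ∃ (x : X) (y' x' : X →L[ℝ] ℝ),
        y' ∈ dualityMap x ∧ (x, x') ∈ A ∧ z' = y' + lam • x' := by
  intro lam hlam z'
  obtain ⟨_, ⟨⟨x, x'⟩, hx, rfl⟩, hJ⟩ :=
    (hA.image_smul_sub hlam z').exists_neg_mem_dualityMap hrefl
  exact ⟨x, _, x', hJ, hx, by simp⟩
end
end
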